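/- arXiv:1103.0741 — 6 statements merged into one kernel-verified Lean document; each statement's English description precedes it below -/
import Mathlib

section
/- Let λ ≥ 1 and R > 0, and set α = 1/(2λ). Let p_1, …, p_n be points of the square [0,√n]², and partition the square into m × m congruent square cells with m = ⌈√(5n)/R⌉. Assume that every cell contains at least R²/λ and at most λR² of the points. Let G be the graph on [n] with an edge {i,j} (i ≠ j) whenever d(p_i, p_j) ≤ R, where d is the Euclidean distance. Then G is an (h, αR²/h)-expander for every h with 1 ≤ h ≤ αR². -/
open Finset MeasureTheory

noncomputable section

/-- Out-neighborhood `N_G(I)` of a set of nodes `I`. -/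
def nbhd {n : ℕ} (G : SimpleGraph (Fin n)) (I : Finset (Fin n)) : Finset (Fin n) := by
  classical exact Finset.univ.filter (fun v => v ∉ I ∧ ∃ u ∈ I, G.Adj u v)

/-- The informed sets of the flooding process on the graph sequence `Gs` with source `s`. -/
def informed {n : ℕ} (Gs : ℕ → SimpleGraph (Fin n)) (s : Fin n) : ℕ → Finset (Fin n)
  | 0 => {s}
  | t + 1 => informed Gs s t ∪ nbhd (Gs t) (informed Gs s t)

/-- `G` is an `(h,k)`-expander: every nonempty set of at most `h` nodes has
out-neighborhood of size at least `k` times its size. -/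
def IsExpander {n : ℕ} (G : SimpleGraph (Fin n)) (h k : ℝ) : Prop :=
  ∀ I : Finset (Fin n), I.Nonempty → (I.card : ℝ) ≤ h →
    k * (I.card : ℝ) ≤ ((nbhd G I).card : ℝ)

/-- Euclidean distance in the plane. -/
def euclDist (x y : ℝ × ℝ) : ℝ := Real.sqrt ((x.1 - y.1) ^ 2 + (x.2 - y.2) ^ 2)

/-- The grid `L_{n,ε}` of points `(iε, jε)`, `i, j ∈ ℕ`, `i, j ≤ √n/ε`. -/
def grid (n : ℕ) (ε : ℝ) : Finset (ℝ × ℝ) :=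
  (Finset.range (⌊Real.sqrt n / ε⌋₊ + 1) ×ˢ Finset.range (⌊Real.sqrt n / ε⌋₊ + 1)).image
    (fun q => ((q.1 : ℝ) * ε, (q.2 : ℝ) * ε))

/-- `Γ(x)`: grid points within (move) radius `r` of `x`. -/
def gamma (n : ℕ) (ε r : ℝ) (x : ℝ × ℝ) : Finset (ℝ × ℝ) := by
  classical exact (grid n ε).filter (fun y => euclDist x y ≤ r)

/-- The stationary distribution `π(x) = |Γ(x)| / Σ_y |Γ(y)|` of node positions. -/
def statDist (n : ℕ) (ε r : ℝ) (x : ℝ × ℝ) : ℝ :=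
  if x ∈ grid n ε then
    ((gamma n ε r x).card : ℝ) / (∑ y ∈ grid n ε, ((gamma n ε r y).card : ℝ))
  else 0

/-- The `n` random positions `P` are independent, each distributed according to `π`. -/
def IsIIDStationary (n : ℕ) (ε r : ℝ) {Ω : Type} [MeasurableSpace Ω] (μ : Measure Ω)
    (P : Ω → Fin n → ℝ × ℝ) : Prop :=
  ∀ f : Fin n → ℝ × ℝ, μ {ω | P ω = f} = ENNReal.ofReal (∏ i, statDist n ε r (f i))

/-- Number of cells per side: `m = ⌈√(5n)/R⌉`. -/
def numCells (n : ℕ) (R : ℝ) : ℕ := ⌈Real.sqrt (5 * n) / R⌉₊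

/-- Side length of a cell. -/
def cellLen (n : ℕ) (R : ℝ) : ℝ := Real.sqrt n / (numCells n R : ℝ)

/-- Membership of a point `x` in cell `(i,j)` of the `m × m` partition of the square
`[0,√n]²` (cells are half-open, except that the last row/column is closed above,
points of the square being below `√n` anyway). -/
def inCell (n : ℕ) (R : ℝ) (i j : ℕ) (x : ℝ × ℝ) : Prop :=
  ((i : ℝ) * cellLen n R ≤ x.1 ∧ (x.1 < ((i : ℝ) + 1) * cellLen n R ∨ i + 1 = numCells n R)) ∧
  ((j : ℝ) * cellLen n R ≤ x.2 ∧ (x.2 < ((j : ℝ) + 1) * cellLen n R ∨ j + 1 = numCells n R))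

/-- The number of nodes whose positions (given by `p`) lie in cell `(i,j)`. -/
def cellCount (n : ℕ) (R : ℝ) (p : Fin n → ℝ × ℝ) (i j : ℕ) : ℕ := by
  classical exact (Finset.univ.filter fun v => inCell n R i j (p v)).card

/-- The geometric graph: an edge between distinct `u, v` iff their positions are at
Euclidean distance at most `R`. -/
def geoGraph (n : ℕ) (R : ℝ) (p : Fin n → ℝ × ℝ) : SimpleGraph (Fin n) :=
  SimpleGraph.fromRel (fun u v => euclDist (p u) (p v) ≤ R)

/-- `x` lies in the square `[0,√n]²`. -/
def inSquare (n : ℕ) (x : ℝ × ℝ) : Prop :=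
  0 ≤ x.1 ∧ x.1 ≤ Real.sqrt n ∧ 0 ≤ x.2 ∧ x.2 ≤ Real.sqrt n

/-- The random graph `G` is distributed as the Erdős–Rényi graph `G_{n,p}`. -/
def IsErdosRenyi {n : ℕ} {Ω : Type} [MeasurableSpace Ω] (μ : Measure Ω)
    (G : Ω → SimpleGraph (Fin n)) (p : ℝ) : Prop :=
  ∀ H : SimpleGraph (Fin n),
    μ {ω | G ω = H} =
      ENNReal.ofReal (p ^ (Nat.card H.edgeSet) * (1 - p) ^ (n.choose 2 - Nat.card H.edgeSet))

/-!
Let `α = 1/(2λ)`. A nonempty set `I` contains a node `u`, and the cell of `u` has diameter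
`√2 ℓ ≤ R`, so every node of that cell lies in `I` or in `N(I)`. The cell holds at least
`R²/λ = 2αR²` nodes, hence `|N(I)| ≥ 2αR² - |I| ≥ 2αR² - h ≥ αR² ≥ (αR²/h)|I|`.
-/

lemma sub_sq_le_of_mem_Icc {a d x y : ℝ} (hx : x ∈ Set.Icc a (a + d))
    (hy : y ∈ Set.Icc a (a + d)) : (x - y) ^ 2 ≤ d ^ 2 := by
  have h := Real.dist_le_of_mem_Icc hx hy
  rw [Real.dist_eq, add_sub_cancel_left] at h
  exact sq_le_sq' (abs_le.1 h).1 (abs_le.1 h).2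

lemma euclDist_le_of_sub_sq_le {x y : ℝ × ℝ} {a r : ℝ} (hr : 0 ≤ r)
    (h₁ : (x.1 - y.1) ^ 2 ≤ a ^ 2) (h₂ : (x.2 - y.2) ^ 2 ≤ a ^ 2) (ha : 2 * a ^ 2 ≤ r ^ 2) :
    euclDist x y ≤ r :=
  (Real.sqrt_le_left hr).2 (by linarith)

section Cells

variable {n : ℕ} {R ℓ x : ℝ} {m i : ℕ}

lemma numCells_pos (hR : 0 < R) (hn : 0 < n) : 0 < numCells n R :=
  Nat.ceil_pos.2 (div_pos (Real.sqrt_pos.2 (by positivity)) hR)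

lemma cellLen_pos (hR : 0 < R) (hn : 0 < n) : 0 < cellLen n R :=
  div_pos (Real.sqrt_pos.2 (by positivity)) (by exact_mod_cast numCells_pos hR hn)

lemma cellLen_nonneg : 0 ≤ cellLen n R := by
  unfold cellLen; positivity

lemma numCells_mul_cellLen (hm : numCells n R ≠ 0) :
    (numCells n R : ℝ) * cellLen n R = Real.sqrt n :=
  mul_div_cancel₀ _ (by exact_mod_cast hm)

lemma cellLen_mul_sqrt_five_le (hR : 0 < R) : cellLen n R * Real.sqrt 5 ≤ R := by
  rcases Nat.eq_zero_or_pos (numCells n R) with hm | hm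
  · simp [cellLen, hm, hR.le]
  have hceil : Real.sqrt (5 * n) / R ≤ numCells n R := Nat.le_ceil _
  rw [div_le_iff₀ hR, Real.sqrt_mul (by norm_num)] at hceil
  rw [cellLen, div_mul_eq_mul_div, div_le_iff₀ (by exact_mod_cast hm)]
  linarith

lemma exists_cell_index (hℓ : 0 < ℓ) (hm : 0 < m) (hx : 0 ≤ x) :
    ∃ i < m, (i : ℝ) * ℓ ≤ x ∧ (x < ((i : ℝ) + 1) * ℓ ∨ i + 1 = m) := by
  have hfloor : (⌊x / ℓ⌋₊ : ℝ) * ℓ ≤ x := (le_div_iff₀ hℓ).1 (Nat.floor_le (div_nonneg hx hℓ.le))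
  by_cases hlt : ⌊x / ℓ⌋₊ < m
  · exact ⟨_, hlt, hfloor, Or.inl ((div_lt_iff₀ hℓ).1 (Nat.lt_floor_add_one _))⟩
  · refine ⟨m - 1, by omega, le_trans ?_ hfloor, Or.inr (by omega)⟩
    gcongr
    exact_mod_cast (by omega : m - 1 ≤ ⌊x / ℓ⌋₊)

lemma mem_Icc_of_cell_index (hx : (i : ℝ) * ℓ ≤ x ∧ (x < ((i : ℝ) + 1) * ℓ ∨ i + 1 = m))
    (hxm : x ≤ m * ℓ) : x ∈ Set.Icc ((i : ℝ) * ℓ) ((i : ℝ) * ℓ + ℓ) := by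
  obtain ⟨hlow, hup | rfl⟩ := hx
  · exact ⟨hlow, by linarith⟩
  · exact ⟨hlow, by push_cast at hxm; linarith⟩

lemma exists_inCell (hR : 0 < R) (hn : 0 < n) {x : ℝ × ℝ} (hx : inSquare n x) :
    ∃ i j, i < numCells n R ∧ j < numCells n R ∧ inCell n R i j x := by
  obtain ⟨i, hi, hxi⟩ := exists_cell_index (cellLen_pos hR hn) (numCells_pos hR hn) hx.1
  obtain ⟨j, hj, hxj⟩ := exists_cell_index (cellLen_pos hR hn) (numCells_pos hR hn) hx.2.2.1
  exact ⟨i, j, hi, hj, hxi, hxj⟩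

lemma two_mul_cellLen_sq_le (hR : 0 < R) : 2 * cellLen n R ^ 2 ≤ R ^ 2 :=
  calc 2 * cellLen n R ^ 2 ≤ (cellLen n R * Real.sqrt 5) ^ 2 := by
        rw [mul_pow, Real.sq_sqrt (by norm_num)]; nlinarith [sq_nonneg (cellLen n R)]
    _ ≤ R ^ 2 := pow_le_pow_left₀ (mul_nonneg cellLen_nonneg (Real.sqrt_nonneg 5))
        (cellLen_mul_sqrt_five_le hR) 2

end Cells

lemma euclDist_le_of_inCell {n : ℕ} {R : ℝ} (hR : 0 < R) (hn : 0 < n) {i j : ℕ} {x y : ℝ × ℝ}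
    (hx : inCell n R i j x) (hy : inCell n R i j y) (hxs : inSquare n x) (hys : inSquare n y) :
    euclDist x y ≤ R := by
  have hside := (numCells_mul_cellLen (numCells_pos hR hn).ne').symm
  refine euclDist_le_of_sub_sq_le hR.le ?_ ?_ (two_mul_cellLen_sq_le (n := n) hR)
  · exact sub_sq_le_of_mem_Icc (mem_Icc_of_cell_index hx.1 (hside ▸ hxs.2.1))
      (mem_Icc_of_cell_index hy.1 (hside ▸ hys.2.1))
  · exact sub_sq_le_of_mem_Icc (mem_Icc_of_cell_index hx.2 (hside ▸ hxs.2.2.2))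
      (mem_Icc_of_cell_index hy.2 (hside ▸ hys.2.2.2))

section Expansion

variable {n : ℕ} {G : SimpleGraph (Fin n)} {I S : Finset (Fin n)} {u : Fin n}

lemma mem_nbhd {v : Fin n} : v ∈ nbhd G I ↔ v ∉ I ∧ ∃ u ∈ I, G.Adj u v := by
  simp [nbhd]

lemma subset_union_nbhd (hu : u ∈ I) (hS : ∀ v ∈ S, v ≠ u → G.Adj u v) :
    S ⊆ I ∪ nbhd G I := by
  intro v hv
  by_cases hvI : v ∈ I
  · exact mem_union_left _ hvI
  · exact mem_union_right _ (mem_nbhd.2 ⟨hvI, u, hu, hS v hv (ne_of_mem_of_not_mem hu hvI).symm⟩)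

lemma card_le_card_add_card_nbhd (hu : u ∈ I) (hS : ∀ v ∈ S, v ≠ u → G.Adj u v) :
    #S ≤ #I + #(nbhd G I) :=
  (card_le_card (subset_union_nbhd hu hS)).trans (card_union_le _ _)

lemma isExpander_of_two_mul_sub_card_le {a h : ℝ} (hha : h ≤ a)
    (hN : ∀ I : Finset (Fin n), I.Nonempty → 2 * a - #I ≤ #(nbhd G I)) :
    IsExpander G h (a / h) := by
  intro I hI hIh
  have hI₁ : (1 : ℝ) ≤ #I := by exact_mod_cast hI.card_pos
  have hh : 0 < h := by linarith
  calc a / h * #I ≤ a / h * h := by gcongr; exact div_nonneg (by linarith) hh.le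
    _ = a := div_mul_cancel₀ a hh.ne'
    _ ≤ 2 * a - #I := by linarith
    _ ≤ #(nbhd G I) := hN I hI

end Expansion

lemma cellCount_le_card_add_card_nbhd {n : ℕ} {R : ℝ} (hR : 0 < R) {p : Fin n → ℝ × ℝ}
    (hsq : ∀ v, inSquare n (p v)) {I : Finset (Fin n)} {u : Fin n} (hu : u ∈ I) {i j : ℕ}
    (hui : inCell n R i j (p u)) :
    cellCount n R p i j ≤ #I + #(nbhd (geoGraph n R p) I) := by
  unfold cellCount
  refine card_le_card_add_card_nbhd hu fun v hv hvu => ?_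
  simp only [mem_filter] at hv
  exact (SimpleGraph.fromRel_adj _ _ _).2
    ⟨hvu.symm, Or.inl (euclDist_le_of_inCell hR u.pos hui hv.2 (hsq u) (hsq v))⟩

theorem geo_expander_small_general (n : ℕ) (lam R : ℝ) (hR : 0 < R)
    (p : Fin n → ℝ × ℝ) (hsq : ∀ v, inSquare n (p v))
    (hcell : ∀ i j : ℕ, i < numCells n R → j < numCells n R →
      R ^ 2 / lam ≤ (cellCount n R p i j : ℝ) ∧ (cellCount n R p i j : ℝ) ≤ lam * R ^ 2)
    (h : ℝ) (h2 : h ≤ (1 / (2 * lam)) * R ^ 2) :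
    IsExpander (geoGraph n R p) h ((1 / (2 * lam)) * R ^ 2 / h) := by
  refine isExpander_of_two_mul_sub_card_le h2 fun I ⟨u, hu⟩ => ?_
  obtain ⟨i, j, hi, hj, hui⟩ := exists_inCell hR u.pos (hsq u)
  have hcount : (cellCount n R p i j : ℝ) ≤ #I + #(nbhd (geoGraph n R p) I) := by
    exact_mod_cast cellCount_le_card_add_card_nbhd hR hsq hu hui
  have hα : 2 * (1 / (2 * lam) * R ^ 2) = R ^ 2 / lam := by ring
  linarith [(hcell i j hi hj).1]

/-- expansion of the geometric graph for small sets. -/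
theorem geo_expander_small (n : ℕ) (lam R : ℝ) (hlam : 1 ≤ lam) (hR : 0 < R)
    (p : Fin n → ℝ × ℝ) (hsq : ∀ v, inSquare n (p v))
    (hcell : ∀ i j : ℕ, i < numCells n R → j < numCells n R →
      R ^ 2 / lam ≤ (cellCount n R p i j : ℝ) ∧ (cellCount n R p i j : ℝ) ≤ lam * R ^ 2)
    (h : ℝ) (h1 : 1 ≤ h) (h2 : h ≤ (1 / (2 * lam)) * R ^ 2) :
    IsExpander (geoGraph n R p) h ((1 / (2 * lam)) * R ^ 2 / h) :=
  geo_expander_small_general n lam R hR p hsq hcell h h2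

end
end

section
/- Let R > 0, r ≥ 0, D > 0, and for each node i ∈ [n] and time t ∈ ℕ let p_{i,t} ∈ ℝ² be the position of node i at time t, where d(p_{i,t+1}, p_{i,t}) ≤ r for all i and t (d is the Euclidean distance). Let G_t be the graph on [n] with an edge {i,j} whenever d(p_{i,t}, p_{j,t}) ≤ R. If u, v ∈ [n] are nodes with d(p_{u,0}, p_{v,0}) ≥ D, then in the flooding process on (G_t) with source v, node u is not informed at any time step t with t < D/(R + 2r); consequently the flooding time from source v is at least D/(R + 2r). -/
open Finset MeasureTheory

noncomputable section

/-!
An informed node at time `t` lies within `t (R + r)` of the source's initial position: in one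
step the message crosses an edge (length at most `R`) and its holder moves (at most `r`).
Meanwhile `u` has moved at most `t r` from its initial position, so `u` can be informed at
time `t` only if `D ≤ t (R + 2r)`.
-/

lemma euclDist_eq_dist (x y : ℝ × ℝ) :
    euclDist x y = dist (WithLp.toLp 2 x) (WithLp.toLp 2 y) := by
  rw [WithLp.prod_dist_eq_of_L2]
  simp [euclDist, Real.dist_eq, sq_abs]

lemma geoGraph_adj_euclDist_le {n : ℕ} {R : ℝ} {p : Fin n → ℝ × ℝ} {u w : Fin n}
    (h : (geoGraph n R p).Adj u w) : euclDist (p u) (p w) ≤ R := by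
  rw [geoGraph, SimpleGraph.fromRel_adj] at h
  rcases h.2 with h | h
  · exact h
  · rwa [euclDist_eq_dist, dist_comm, ← euclDist_eq_dist]

lemma mem_informed_succ {n : ℕ} {Gs : ℕ → SimpleGraph (Fin n)} {s w : Fin n} {t : ℕ} :
    w ∈ informed Gs s (t + 1) ↔
      w ∈ informed Gs s t ∨ ∃ u ∈ informed Gs s t, (Gs t).Adj u w := by
  simp only [informed, nbhd, mem_union, mem_filter, mem_univ, true_and]
  tauto

section MovingNodes

variable {X : Type*} [PseudoMetricSpace X] {n : ℕ} {Gs : ℕ → SimpleGraph (Fin n)}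
  {q : ℕ → Fin n → X} {R r : ℝ}

lemma dist_le_mul_of_dist_succ_le (hmove : ∀ t i, dist (q (t + 1) i) (q t i) ≤ r)
    (i : Fin n) (t : ℕ) : dist (q 0 i) (q t i) ≤ t * r := by
  simpa using dist_le_range_sum_of_dist_le (f := fun k => q k i) (d := fun _ => r) t
    fun _ => (dist_comm _ _).trans_le (hmove _ i)

lemma dist_le_of_mem_informed (hR : 0 ≤ R)
    (hadj : ∀ t u w, (Gs t).Adj u w → dist (q t u) (q t w) ≤ R)
    (hmove : ∀ t i, dist (q (t + 1) i) (q t i) ≤ r) {s : Fin n} :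
    ∀ {t : ℕ} {w : Fin n}, w ∈ informed Gs s t → dist (q 0 s) (q t w) ≤ t * (R + r)
  | 0, w, hw => by
    rw [informed, mem_singleton] at hw
    simp [hw]
  | t + 1, w, hw => by
    have hstep := (dist_comm _ _).trans_le (hmove t w)
    push_cast
    rcases mem_informed_succ.1 hw with hw | ⟨u, hu, huw⟩
    · have := dist_le_of_mem_informed hR hadj hmove hw
      linarith [dist_triangle (q 0 s) (q t w) (q (t + 1) w)]
    · have := dist_le_of_mem_informed hR hadj hmove hu
      linarith [dist_triangle4 (q 0 s) (q t u) (q t w) (q (t + 1) w), hadj t u w huw]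

lemma notMem_informed_of_mul_lt_dist (hR : 0 ≤ R)
    (hadj : ∀ t u w, (Gs t).Adj u w → dist (q t u) (q t w) ≤ R)
    (hmove : ∀ t i, dist (q (t + 1) i) (q t i) ≤ r) {s u : Fin n} {t : ℕ}
    (hfar : t * (R + 2 * r) < dist (q 0 u) (q 0 s)) : u ∉ informed Gs s t := by
  intro hu
  have hsource := dist_le_of_mem_informed hR hadj hmove hu
  have hdrift := dist_le_mul_of_dist_succ_le hmove u t
  linarith [dist_triangle (q 0 u) (q t u) (q 0 s), dist_comm (q t u) (q 0 s)]

end MovingNodes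

theorem geo_flooding_lb_det_general (n : ℕ) (R r D : ℝ) (hR : 0 < R) (hr : 0 ≤ r)
    (p : ℕ → Fin n → ℝ × ℝ)
    (hmove : ∀ (t : ℕ) (i : Fin n), euclDist (p (t + 1) i) (p t i) ≤ r)
    (u v : Fin n) (huv : D ≤ euclDist (p 0 u) (p 0 v)) :
    (∀ t : ℕ, (t : ℝ) < D / (R + 2 * r) →
      u ∉ informed (fun t' => geoGraph n R (p t')) v t) ∧
    (∀ t : ℕ, (t : ℝ) < D / (R + 2 * r) →
      informed (fun t' => geoGraph n R (p t')) v t ≠ Finset.univ) := by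
  have hspeed : 0 < R + 2 * r := by positivity
  have not_informed : ∀ t : ℕ, (t : ℝ) < D / (R + 2 * r) →
      u ∉ informed (fun t' => geoGraph n R (p t')) v t := by
    intro t ht
    refine notMem_informed_of_mul_lt_dist (q := fun t i => WithLp.toLp 2 (p t i)) (r := r)
      hR.le (fun t u w huw => ?_) (fun t i => ?_) ?_ <;> rw [← euclDist_eq_dist]
    · exact geoGraph_adj_euclDist_le huw
    · exact hmove t i
    · exact ((lt_div_iff₀ hspeed).1 ht).trans_le huv
  exact ⟨not_informed, fun t ht h => not_informed t ht (h ▸ mem_univ u)⟩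

/-- deterministic lower bound on flooding from a far-away source. -/
theorem geo_flooding_lb_det (n : ℕ) (R r D : ℝ) (hR : 0 < R) (hr : 0 ≤ r) (hD : 0 < D)
    (p : ℕ → Fin n → ℝ × ℝ)
    (hmove : ∀ (t : ℕ) (i : Fin n), euclDist (p (t + 1) i) (p t i) ≤ r)
    (u v : Fin n) (huv : D ≤ euclDist (p 0 u) (p 0 v)) :
    (∀ t : ℕ, (t : ℝ) < D / (R + 2 * r) →
      u ∉ informed (fun t' => geoGraph n R (p t')) v t) ∧
    (∀ t : ℕ, (t : ℝ) < D / (R + 2 * r) →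
      informed (fun t' => geoGraph n R (p t')) v t ≠ Finset.univ) :=
  geo_flooding_lb_det_general n R r D hR hr p hmove u v huv

end
end

section
/- There exist constants c, c' > 0 such that the following holds. Let p̂ satisfy c·(log n)/n ≤ p̂ ≤ 1, and let (G_t)_{t∈ℕ} be a sequence of random graphs on [n] such that every G_t is distributed as G_{n,p̂} (as holds for a stationary edge-Markovian evolving graph). Then with probability at least 1 − 1/n the flooding time of (G_t) is at least c' · log n / log(n·p̂); in fact, with probability at least 1 − 1/n, for every source s and every time t < log(n/2)/log(2·n·p̂) the set of informed nodes has size at most (2·n·p̂)^t < n/2. -/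
open Finset MeasureTheory

noncomputable section

/-!
Under `G(n, p)` the degree of a vertex is `Bin(n - 1, p)`; evaluating its generating
function at `2` (a Chernoff bound with `θ = log 2`) gives
`P(deg v > 2np - 1) ≤ exp (np - (2np - 1) log 2)`, which is at most `n⁻³` once
`np ≥ 99 log n`. A union bound over the first `n` rounds and all vertices shows that with
probability at least `1 - 1/n` all these degrees are at most `2np - 1`. Then every informed
node informs at most `2np - 1` new ones per round, so `|I_t| ≤ (2np)^t`, which stays
below `n / 2` while `t < log (n / 2) / log (2np)`.
-/

open Real

theorem Finset.sum_powerset_mul_pow_card_inter {E R : Type*} [DecidableEq E] [CommSemiring R]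
    {U A : Finset E} (hA : A ⊆ U) (p q x : R) :
    ∑ s ∈ U.powerset, p ^ #s * q ^ #(U \ s) * x ^ #(s ∩ A) =
      (p * x + q) ^ #A * (p + q) ^ #(U \ A) := by
  have hprod := prod_add (fun i => p * if i ∈ A then x else 1) (fun _ => q) U
  have hlhs : ∏ i ∈ U, ((p * if i ∈ A then x else 1) + q) =
      (p * x + q) ^ #A * (p + q) ^ #(U \ A) := by
    simp_rw [mul_ite, mul_one, ite_add, prod_ite, prod_const, filter_mem_eq_inter,
      inter_eq_right.mpr hA, filter_not, filter_mem_eq_inter, inter_eq_right.mpr hA]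
  rw [← hlhs, hprod]
  refine sum_congr rfl fun s _ => ?_
  rw [prod_mul_distrib, prod_const, prod_const, prod_ite_mem, prod_const]
  ring

theorem Finset.sum_filter_lt_le_exp_mul_sum {ι : Type*} (s : Finset ι) {w f : ι → ℝ}
    (hw : ∀ i ∈ s, 0 ≤ w i) {θ : ℝ} (hθ : 0 ≤ θ) (a : ℝ) :
    ∑ i ∈ s with a < f i, w i ≤ exp (-(θ * a)) * ∑ i ∈ s, w i * exp (θ * f i) := by
  calc ∑ i ∈ s with a < f i, w i
      ≤ ∑ i ∈ s with a < f i, w i * exp (θ * (f i - a)) :=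
        sum_le_sum fun i hi => le_mul_of_one_le_right (hw i (mem_filter.mp hi).1)
          (one_le_exp (mul_nonneg hθ (sub_nonneg.mpr (mem_filter.mp hi).2.le)))
    _ ≤ ∑ i ∈ s, w i * exp (θ * (f i - a)) :=
        sum_le_sum_of_subset_of_nonneg (filter_subset _ _) fun i hi _ =>
          mul_nonneg (hw i hi) (exp_pos _).le
    _ = exp (-(θ * a)) * ∑ i ∈ s, w i * exp (θ * f i) := by
        rw [mul_sum]
        refine sum_congr rfl fun i _ => ?_
        rw [mul_sub, sub_eq_add_neg, exp_add]
        ring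

namespace SimpleGraph

variable {V : Type*} [Fintype V]

def erdosRenyiWeight (p : ℝ) (H : SimpleGraph V) : ℝ :=
  p ^ Nat.card H.edgeSet * (1 - p) ^ ((Fintype.card V).choose 2 - Nat.card H.edgeSet)

theorem erdosRenyiWeight_nonneg {p : ℝ} (hp₀ : 0 ≤ p) (hp₁ : p ≤ 1) (H : SimpleGraph V) :
    0 ≤ erdosRenyiWeight p H :=
  mul_nonneg (pow_nonneg hp₀ _) (pow_nonneg (sub_nonneg.mpr hp₁) _)

variable [DecidableEq V]

open Classical in
theorem sum_erdosRenyiWeight_mul_pow_degree (p x : ℝ) (v : V) :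
    ∑ H : SimpleGraph V, erdosRenyiWeight p H * x ^ H.degree v =
      (p * x + (1 - p)) ^ (Fintype.card V - 1) := by
  have hreindex : ∑ H : SimpleGraph V, erdosRenyiWeight p H * x ^ H.degree v =
      ∑ s ∈ (⊤ : SimpleGraph V).edgeFinset.powerset,
        p ^ #s * (1 - p) ^ #((⊤ : SimpleGraph V).edgeFinset \ s) *
          x ^ #(s ∩ (⊤ : SimpleGraph V).incidenceFinset v) := by
    refine sum_nbij' (fun H => H.edgeFinset)
      (fun s : Finset (Sym2 V) => fromEdgeSet (s : Set (Sym2 V))) ?_ ?_ ?_ ?_ ?_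
    · exact fun H _ => mem_powerset.mpr (edgeFinset_mono le_top)
    · simp
    · simp
    · intro s hs
      ext e
      simpa using @mem_powerset.mp hs e
    · intro H _
      have hinc :
          H.edgeFinset ∩ (⊤ : SimpleGraph V).incidenceFinset v = H.incidenceFinset v := by
        ext e
        simpa [incidenceSet] using fun he _ => H.not_isDiag_of_mem_edgeSet he
      rw [erdosRenyiWeight, hinc, card_incidenceFinset_eq_degree,
        card_sdiff_of_subset (edgeFinset_mono le_top), card_edgeFinset_top_eq_card_choose_two,
        Nat.card_eq_fintype_card, ← edgeFinset_card]
  rw [hreindex, sum_powerset_mul_pow_card_inter (incidenceFinset_subset _ v),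
    card_incidenceFinset_eq_degree, complete_graph_degree, add_sub_cancel, one_pow, mul_one]

open Classical in
theorem sum_erdosRenyiWeight_degree_gt_le {p : ℝ} (hp₀ : 0 ≤ p) (hp₁ : p ≤ 1) (v : V) (a : ℝ) :
    ∑ H with a < (H.degree v : ℝ), erdosRenyiWeight p H ≤
      exp (Fintype.card V * p - log 2 * a) := by
  have hmgf : ∑ H : SimpleGraph V, erdosRenyiWeight p H * exp (log 2 * H.degree v) =
      (1 + p) ^ (Fintype.card V - 1) := by
    simp_rw [mul_comm (log 2), exp_nat_mul, exp_log two_pos,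
      sum_erdosRenyiWeight_mul_pow_degree]
    ring_nf
  have hbin : (1 + p) ^ (Fintype.card V - 1) ≤ exp (Fintype.card V * p) :=
    calc (1 + p) ^ (Fintype.card V - 1) ≤ exp p ^ (Fintype.card V - 1) :=
          pow_le_pow_left₀ (by linarith) (by linarith [add_one_le_exp p]) _
      _ ≤ exp p ^ Fintype.card V := pow_le_pow_right₀ (one_le_exp hp₀) (Nat.sub_le _ _)
      _ = exp (Fintype.card V * p) := (exp_nat_mul _ _).symm
  calc ∑ H with a < (H.degree v : ℝ), erdosRenyiWeight p H
      ≤ exp (-(log 2 * a)) * (1 + p) ^ (Fintype.card V - 1) :=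
        hmgf ▸ sum_filter_lt_le_exp_mul_sum _ (fun H _ => erdosRenyiWeight_nonneg hp₀ hp₁ H)
          (log_nonneg one_le_two) a
    _ ≤ exp (-(log 2 * a)) * exp (Fintype.card V * p) := by gcongr
    _ = exp (Fintype.card V * p - log 2 * a) := by rw [← exp_add]; ring_nf

end SimpleGraph

open SimpleGraph

section ErdosRenyi

variable {n : ℕ} {Ω : Type} [MeasurableSpace Ω] {μ : Measure Ω} {p : ℝ}

theorem IsErdosRenyi.measure_le_sum_erdosRenyiWeight {G : Ω → SimpleGraph (Fin n)}
    (hG : IsErdosRenyi μ G p) (hp₀ : 0 ≤ p) (hp₁ : p ≤ 1) (P : SimpleGraph (Fin n) → Prop)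
    [DecidablePred P] :
    μ {ω | P (G ω)} ≤ ENNReal.ofReal (∑ H with P H, erdosRenyiWeight p H) := by
  have hunion : {ω | P (G ω)} = ⋃ H ∈ ({H | P H} : Finset _), {ω | G ω = H} := by
    ext ω
    simp
  rw [hunion, ENNReal.ofReal_sum_of_nonneg fun H _ => erdosRenyiWeight_nonneg hp₀ hp₁ H]
  refine (measure_biUnion_finset_le _ _).trans_eq (sum_congr rfl fun H _ => ?_)
  rw [hG H, erdosRenyiWeight, Fintype.card_fin]

open Classical in
theorem IsErdosRenyi.measure_degree_gt_le {G : Ω → SimpleGraph (Fin n)}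
    (hG : IsErdosRenyi μ G p) (hp₀ : 0 ≤ p) (hp₁ : p ≤ 1) (v : Fin n) (a : ℝ) :
    μ {ω | a < ((G ω).degree v : ℝ)} ≤ ENNReal.ofReal (exp (n * p - log 2 * a)) := by
  refine (hG.measure_le_sum_erdosRenyiWeight hp₀ hp₁ fun H => a < (H.degree v : ℝ)).trans
    (ENNReal.ofReal_le_ofReal ?_)
  simpa only [Fintype.card_fin] using sum_erdosRenyiWeight_degree_gt_le hp₀ hp₁ v a

open Classical in
theorem measure_exists_degree_gt_le {Gs : ℕ → Ω → SimpleGraph (Fin n)}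
    (hG : ∀ t, IsErdosRenyi μ (Gs t) p) (hp₀ : 0 ≤ p) (hp₁ : p ≤ 1) (T : ℕ) (a : ℝ) :
    μ {ω | ∃ t < T, ∃ v, a < ((Gs t ω).degree v : ℝ)} ≤
      ENNReal.ofReal (T * n * exp (n * p - log 2 * a)) := by
  have hunion : {ω | ∃ t < T, ∃ v, a < ((Gs t ω).degree v : ℝ)} =
      ⋃ t ∈ range T, ⋃ v ∈ (univ : Finset (Fin n)), {ω | a < ((Gs t ω).degree v : ℝ)} := by
    ext ω
    simp
  calc μ {ω | ∃ t < T, ∃ v, a < ((Gs t ω).degree v : ℝ)}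
      ≤ ∑ t ∈ range T, ∑ v : Fin n, μ {ω | a < ((Gs t ω).degree v : ℝ)} :=
        hunion ▸ (measure_biUnion_finset_le _ _).trans
          (sum_le_sum fun t _ => measure_biUnion_finset_le _ _)
    _ ≤ ∑ t ∈ range T, ∑ v : Fin n, ENNReal.ofReal (exp (n * p - log 2 * a)) :=
        sum_le_sum fun t _ => sum_le_sum fun v _ => (hG t).measure_degree_gt_le hp₀ hp₁ v a
    _ = ENNReal.ofReal (T * n * exp (n * p - log 2 * a)) := by
        rw [sum_const, sum_const, card_range, card_univ, Fintype.card_fin, nsmul_eq_mul,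
          nsmul_eq_mul, ENNReal.ofReal_mul (by positivity), ENNReal.ofReal_mul (by positivity),
          ENNReal.ofReal_natCast, ENNReal.ofReal_natCast, mul_assoc]

end ErdosRenyi

theorem ofReal_one_sub_le_measure {Ω : Type*} [MeasurableSpace Ω] {μ : Measure Ω}
    [IsProbabilityMeasure μ] {s : Set Ω} {ε : ℝ} (hε : 0 ≤ ε) (h : μ sᶜ ≤ ENNReal.ofReal ε) :
    ENNReal.ofReal (1 - ε) ≤ μ s := by
  rw [ENNReal.ofReal_sub _ hε, ENNReal.ofReal_one, tsub_le_iff_right]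
  calc 1 = μ Set.univ := measure_univ.symm
    _ ≤ μ s + μ sᶜ := measure_univ_le_add_compl s
    _ ≤ μ s + ENNReal.ofReal ε := by gcongr

section Flooding

variable {n : ℕ}

theorem card_nbhd_le_sum_degree (G : SimpleGraph (Fin n)) [DecidableRel G.Adj]
    (I : Finset (Fin n)) : #(nbhd G I) ≤ ∑ u ∈ I, G.degree u := by
  refine (card_le_card fun v hv => ?_).trans card_biUnion_le
  obtain ⟨-, u, hu, huv⟩ := by simpa [nbhd] using hv
  exact mem_biUnion.mpr ⟨u, hu, (G.mem_neighborFinset u v).mpr huv⟩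

theorem card_informed_le_pow (Gs : ℕ → SimpleGraph (Fin n)) [∀ t, DecidableRel (Gs t).Adj]
    (s : Fin n) {T : ℕ} {D : ℝ} (hdeg : ∀ t < T, ∀ v, ((Gs t).degree v : ℝ) ≤ D) :
    ∀ t ≤ T, (#(informed Gs s t) : ℝ) ≤ (D + 1) ^ t := by
  intro t
  induction t with
  | zero => simp [informed]
  | succ t ih =>
    intro htT
    set I := informed Gs s t
    have hD : 0 ≤ D := (Nat.cast_nonneg _).trans (hdeg t htT s)
    have hnbhd : (#(nbhd (Gs t) I) : ℝ) ≤ D * #I := by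
      calc (#(nbhd (Gs t) I) : ℝ) ≤ ∑ u ∈ I, ((Gs t).degree u : ℝ) := by
            exact_mod_cast card_nbhd_le_sum_degree (Gs t) I
        _ ≤ ∑ _u ∈ I, D := sum_le_sum fun u _ => hdeg t htT u
        _ = D * #I := by rw [sum_const, nsmul_eq_mul, mul_comm]
    calc (#(informed Gs s (t + 1)) : ℝ) ≤ #I + #(nbhd (Gs t) I) := by
          exact_mod_cast card_union_le I (nbhd (Gs t) I)
      _ ≤ (D + 1) * #I := by linarith
      _ ≤ (D + 1) * (D + 1) ^ t := by gcongr; exact ih (Nat.le_of_succ_le htT)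
      _ = (D + 1) ^ (t + 1) := by ring

theorem card_informed_le_pow_lt_half (Gs : ℕ → SimpleGraph (Fin n))
    [∀ t, DecidableRel (Gs t).Adj] {p : ℝ} (hnp : 2 ≤ n * p)
    (hdeg : ∀ t < n, ∀ v, ((Gs t).degree v : ℝ) ≤ 2 * n * p - 1) (s : Fin n) (t : ℕ)
    (ht : (t : ℝ) < log (n / 2) / log (2 * n * p)) :
    (#(informed Gs s t) : ℝ) ≤ (2 * n * p) ^ t ∧ (2 * n * p) ^ t < n / 2 := by
  have hlog : 1 ≤ log (2 * n * p) := by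
    rw [le_log_iff_exp_le (by linarith)]
    linarith [exp_one_lt_d9]
  have htlog : t * log (2 * n * p) < log (n / 2) := (lt_div_iff₀ (by linarith)).mp ht
  have hn : 1 < (n : ℝ) / 2 := by
    refine (log_pos_iff (by positivity)).mp ?_
    exact (mul_nonneg t.cast_nonneg (by linarith)).trans_lt htlog
  have hpow : (2 * n * p) ^ t < n / 2 :=
    (pow_lt_iff_lt_log (by linarith) (by linarith)).mpr htlog
  have htn : t ≤ n := by
    have : (t : ℝ) ≤ n := by
      nlinarith [log_le_sub_one_of_pos (show (0 : ℝ) < n / 2 by linarith),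
        t.cast_nonneg (α := ℝ)]
    exact_mod_cast this
  refine ⟨?_, hpow⟩
  simpa using card_informed_le_pow Gs s hdeg t htn

end Flooding

theorem log_div_log_le_log_half_div_log_two_mul {x p : ℝ} (hx : 4 ≤ x) (hxp : 2 ≤ x * p) :
    1 / 4 * log x / log (x * p) ≤ log (x / 2) / log (2 * x * p) := by
  have hlog2 : 0 < log 2 := log_pos one_lt_two
  have hxp2 : log 2 ≤ log (x * p) := log_le_log two_pos hxp
  have hx4 : 2 * log 2 ≤ log x := by
    rw [← log_rpow two_pos]; exact log_le_log (by norm_num) (by norm_num; linarith)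
  have hlog2xp : 0 < log (2 * (x * p)) := by rw [log_mul two_ne_zero (by linarith)]; linarith
  rw [mul_assoc, div_le_div_iff₀ (by linarith) hlog2xp, log_div (by linarith) two_ne_zero,
    log_mul two_ne_zero (by linarith)]
  nlinarith

theorem mul_self_mul_exp_le_one_div {x p : ℝ} (hx : 2 ≤ x) (hxp : 99 * log x ≤ x * p) :
    x * x * exp (x * p - log 2 * (2 * x * p - 1)) ≤ 1 / x := by
  have hlog : log 2 ≤ log x := log_le_log two_pos hx
  have hexp : exp (x * p - log 2 * (2 * x * p - 1)) ≤ exp (log (x ^ 3)⁻¹) := by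
    rw [log_inv, log_pow]
    gcongr
    push_cast
    have hxp₀ : 0 ≤ x * p := by linarith [log_two_gt_d9]
    nlinarith [mul_le_mul_of_nonneg_right log_two_gt_d9.le hxp₀]
  rw [exp_log (by positivity)] at hexp
  calc x * x * exp (x * p - log 2 * (2 * x * p - 1)) ≤ x * x * (x ^ 3)⁻¹ := by gcongr
    _ = 1 / x := by field_simp


/-- lower bound on flooding time of stationary edge-MEG. -/
theorem edge_flooding_lb :
    ∃ c c' : ℝ, 0 < c ∧ 0 < c' ∧
      ∀ (n : ℕ) (phat : ℝ) (Ω : Type) [MeasurableSpace Ω] (μ : Measure Ω)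
        [IsProbabilityMeasure μ] (Gs : ℕ → Ω → SimpleGraph (Fin n)),
        2 ≤ n → c * Real.log n / n ≤ phat → phat ≤ 1 →
        (∀ t : ℕ, IsErdosRenyi μ (Gs t) phat) →
        ENNReal.ofReal (1 - 1 / (n : ℝ)) ≤
          μ {ω |
            (∀ t : ℕ, (t : ℝ) < c' * Real.log n / Real.log ((n : ℝ) * phat) →
              ∃ src : Fin n, informed (fun t' => Gs t' ω) src t ≠ Finset.univ) ∧
            (∀ (src : Fin n) (t : ℕ),
              (t : ℝ) < Real.log ((n : ℝ) / 2) / Real.log (2 * (n : ℝ) * phat) →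
              ((informed (fun t' => Gs t' ω) src t).card : ℝ) ≤ (2 * (n : ℝ) * phat) ^ t ∧
              (2 * (n : ℝ) * phat) ^ t < (n : ℝ) / 2)} := by
  classical
  refine ⟨99, 1 / 4, by norm_num, by norm_num, ?_⟩
  intro n phat Ω _ μ _ Gs hn hplo hphi hER
  have hn₀ : (0 : ℝ) < n := by positivity
  have hnp : 99 * log n ≤ n * phat := by rwa [div_le_iff₀ hn₀, mul_comm phat] at hplo
  have hlog : log 2 ≤ log n := log_le_log two_pos (by exact_mod_cast hn)
  have hnp₂ : 2 ≤ n * phat := by linarith [log_two_gt_d9]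
  have hp₀ : 0 ≤ phat := (pos_of_mul_pos_right (by linarith) hn₀.le).le
  have hn₄ : (4 : ℝ) ≤ n := by nlinarith [log_two_gt_d9]
  have hunion := mul_self_mul_exp_le_one_div (by exact_mod_cast hn) hnp
  refine ofReal_one_sub_le_measure (by positivity) ((measure_mono ?_).trans
    ((measure_exists_degree_gt_le hER hp₀ hphi n (2 * n * phat - 1)).trans
      (ENNReal.ofReal_le_ofReal hunion)))
  refine Set.compl_subset_comm.mp fun ω hω => ?_
  simp only [Set.mem_compl_iff, Set.mem_ofPred_eq, not_exists, not_and, not_lt] at hω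
  have hbounds := card_informed_le_pow_lt_half (fun t => Gs t ω) hnp₂ hω
  refine ⟨fun t ht => ⟨⟨0, by omega⟩, fun huniv => ?_⟩, hbounds⟩
  have := hbounds ⟨0, by omega⟩ t
    (ht.trans_le (log_div_log_le_log_half_div_log_two_mul hn₄ hnp₂))
  rw [huniv, card_univ, Fintype.card_fin] at this
  linarith [this.1, this.2]

end
end

section
/- There is a constant C > 0 such that for every integer T ≥ 2, Σ_{h=1}^{T} 1/( h · log(1 + T/h) ) ≤ C · (1 + log log T), where log denotes the natural logarithm. -/
open Finset MeasureTheory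

noncomputable section

/-!
Since `(1 + s)² ≥ 4s`, the summand at `h` is at most `2 / (h log (4T/h)) ≤ 4 / ((h + 1) log (4T/h))`,
and applying `(x - y) / x ≤ log x - log y` twice bounds this by the increment of
`x ↦ -log log (4T/x)` over `[h, h + 1]`. The sum therefore telescopes to at most
`4 (log log (4T) - log log 2)`.
-/

open Real

lemma sub_div_le_log_sub_log {x y : ℝ} (hx : 0 < x) (hy : 0 < y) :
    (x - y) / x ≤ log x - log y := by
  have h := one_sub_inv_le_log_of_pos (div_pos hx hy)
  rw [sub_div, div_self hx.ne']
  rwa [inv_div, log_div hx.ne' hy.ne'] at h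

lemma log_four_mul_le_two_mul_log_one_add {s : ℝ} (hs : 0 < s) :
    log (4 * s) ≤ 2 * log (1 + s) :=
  calc log (4 * s) ≤ log ((1 + s) ^ 2) :=
        log_le_log (by positivity) (by nlinarith [sq_nonneg (1 - s)])
    _ = 2 * log (1 + s) := by rw [log_pow]; norm_num

lemma one_div_mul_log_one_add_div_le {t x : ℝ} (hx : 1 ≤ x) (hxt : x + 1 < 4 * t) :
    1 / (x * log (1 + t / x)) ≤
      4 * (log (log (4 * t / x)) - log (log (4 * t / (x + 1)))) := by
  set A := log (4 * t / x)
  set B := log (4 * t / (x + 1))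
  have ht : 0 < 4 * t := by linarith
  have hB : 0 < B := log_pos ((one_lt_div (by linarith)).2 hxt)
  have hAB : 1 / (x + 1) ≤ A - B := by
    have h := sub_div_le_log_sub_log (by linarith : 0 < x + 1) (by linarith : 0 < x)
    have hdiff : A - B = log (x + 1) - log x := by
      simp only [A, B, log_div ht.ne' (by linarith : x ≠ 0),
        log_div ht.ne' (by linarith : x + 1 ≠ 0)]
      ring
    rwa [add_sub_cancel_left, ← hdiff] at h
  have hA : 0 < A := by linarith [one_div_pos.2 (by linarith : 0 < x + 1)]
  have hlog : A ≤ 2 * log (1 + t / x) := by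
    simpa only [A, mul_div_assoc] using
      log_four_mul_le_two_mul_log_one_add (div_pos (by linarith : 0 < t) (by linarith : 0 < x))
  calc 1 / (x * log (1 + t / x)) ≤ 2 / (x * A) := by
        rw [div_le_div_iff₀ (by nlinarith) (by nlinarith)]; nlinarith
    _ ≤ 4 / ((x + 1) * A) := by
        rw [div_le_div_iff₀ (by nlinarith) (by nlinarith)]; nlinarith
    _ = 4 * (1 / (x + 1) / A) := by field_simp
    _ ≤ 4 * ((A - B) / A) := by gcongr
    _ ≤ 4 * (log A - log B) := by gcongr; exact sub_div_le_log_sub_log hA hB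

lemma sum_one_div_mul_log_one_add_div_le {T : ℕ} (hT : 1 ≤ T) :
    ∑ h ∈ Icc 1 T, 1 / ((h : ℝ) * log (1 + (T : ℝ) / h)) ≤
      4 * (log (log (4 * T)) - log (log 2)) := by
  set φ : ℕ → ℝ := fun h => log (log (4 * T / h))
  have hT' : (1 : ℝ) ≤ T := by exact_mod_cast hT
  have hφ : log (log 2) ≤ φ (T + 1) := by
    refine log_le_log (log_pos one_lt_two) (log_le_log two_pos ?_)
    rw [le_div_iff₀ (by positivity)]
    push_cast
    linarith
  calc ∑ h ∈ Icc 1 T, 1 / ((h : ℝ) * log (1 + (T : ℝ) / h))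
      ≤ ∑ h ∈ Icc 1 T, 4 * (φ h - φ (h + 1)) := by
        refine sum_le_sum fun h hh => ?_
        obtain ⟨h1, hhT⟩ := mem_Icc.1 hh
        have hh' : (h : ℝ) + 1 < 4 * T := by
          have : (h : ℝ) ≤ T := by exact_mod_cast hhT
          linarith
        simpa only [φ, Nat.cast_add, Nat.cast_one] using
          one_div_mul_log_one_add_div_le (by exact_mod_cast h1) hh'
    _ = 4 * (φ 1 - φ (T + 1)) := by
        rw [← mul_sum, ← neg_sub (φ (T + 1)), ← sum_Icc_sub hT, ← sum_neg_distrib]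
        simp only [neg_sub]
    _ ≤ 4 * (log (log (4 * T)) - log (log 2)) := by
        simp only [φ, Nat.cast_one, div_one]
        linarith

lemma log_log_four_mul_le {t : ℝ} (ht : 2 ≤ t) :
    log (log (4 * t)) ≤ log 3 + log (log t) := by
  have hlogt : 0 < log t := log_pos (by linarith)
  calc log (log (4 * t)) ≤ log (log (t ^ 3)) :=
        log_le_log (log_pos (by linarith)) (log_le_log (by linarith)
          (by nlinarith [mul_nonneg (by linarith : 0 ≤ t) (by nlinarith : 0 ≤ t ^ 2 - 4)]))
    _ = log 3 + log (log t) := by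
        rw [log_pow, Nat.cast_ofNat, log_mul (by norm_num) hlogt.ne']

lemma neg_half_le_log_log_two : -(1 / 2) ≤ log (log 2) := by
  have hlog2 : (2 : ℝ) / 3 < log 2 := by linarith [log_two_gt_d9]
  have hinv : (log 2)⁻¹ ≤ 3 / 2 := by
    rw [inv_le_comm₀ (by linarith) (by norm_num)]
    linarith
  linarith [one_sub_inv_le_log_of_pos (by linarith : 0 < log 2)]

/-- the first-phase sum is `O(1 + log log T)`. -/
theorem phase1_sum :
    ∃ C : ℝ, 0 < C ∧ ∀ T : ℕ, 2 ≤ T →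
      ∑ h ∈ Finset.Icc 1 T, 1 / ((h : ℝ) * Real.log (1 + (T : ℝ) / (h : ℝ))) ≤
        C * (1 + Real.log (Real.log T)) := by
  refine ⟨20, by norm_num, fun T hT => ?_⟩
  have hT' : (2 : ℝ) ≤ T := by exact_mod_cast hT
  have hloglogT : log (log 2) ≤ log (log T) :=
    log_le_log (log_pos one_lt_two) (log_le_log two_pos hT')
  have hlog3 : log 3 ≤ 2 := by linarith [log_le_sub_one_of_pos (by norm_num : (0 : ℝ) < 3)]
  calc ∑ h ∈ Icc 1 T, 1 / ((h : ℝ) * log (1 + (T : ℝ) / h))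
      ≤ 4 * (log (log (4 * T)) - log (log 2)) := sum_one_div_mul_log_one_add_div_le (by omega)
    _ ≤ 20 * (1 + log (log T)) := by
        linarith [log_log_four_mul_le hT', neg_half_le_log_log_two]

end
end

section
/- For all constants α, β > 0 there is a constant C > 0 such that the following holds for every n and every R > 0 with 1 ≤ αR² ≤ n/2: Σ_{h=⌈αR²⌉}^{⌊n/2⌋} 1/( h · log(1 + βR/√h) ) ≤ C · √n / R, where log denotes the natural logarithm. -/
open Finset MeasureTheory

noncomputable section

/-! Since `log (1 + x) ≥ 2x / (x + 2)`, the `h`-th term is at most `(1/β + 1/(2√α)) / (R √h)`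
once `√h ≥ √α R`, and `∑_{h ≤ N} 1/√h ≤ 2√N` by telescoping against `2(√(h+1) - √h)`. -/

open Real

lemma one_div_sqrt_succ_le_two_mul_sub (k : ℕ) :
    1 / √(k + 1 : ℝ) ≤ 2 * (√(k + 1 : ℝ) - √k) := by
  have hk : √(k : ℝ) ≤ √(k + 1 : ℝ) := sqrt_le_sqrt (by linarith)
  have hsq : √(k + 1 : ℝ) ^ 2 - √(k : ℝ) ^ 2 = 1 := by
    rw [sq_sqrt (by positivity), sq_sqrt (by positivity)]; ring
  rw [div_le_iff₀ (sqrt_pos.2 (by positivity))]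
  nlinarith [sqrt_nonneg (k : ℝ)]

lemma sum_Icc_one_div_sqrt_le (N : ℕ) : ∑ k ∈ Icc 1 N, 1 / √(k : ℝ) ≤ 2 * √(N : ℝ) := by
  induction N with
  | zero => simp
  | succ N ih =>
    rw [sum_Icc_succ_top (by omega), Nat.cast_succ]
    linarith [one_div_sqrt_succ_le_two_mul_sub N]

lemma one_div_log_one_add_le {x : ℝ} (hx : 0 < x) : 1 / log (1 + x) ≤ 1 / x + 1 / 2 := by
  calc 1 / log (1 + x) ≤ 1 / (2 * x / (x + 2)) :=
        one_div_le_one_div_of_le (by positivity) (le_log_one_add_of_nonneg hx.le)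
    _ = 1 / x + 1 / 2 := by field_simp; ring

lemma one_div_mul_log_one_add_div_sqrt_le {a b x : ℝ} (ha : 0 < a) (hb : 0 < b)
    (hax : a ≤ √x) :
    1 / (x * log (1 + b / √x)) ≤ (1 / b + 1 / (2 * a)) / √x := by
  set s := √x
  have hs : 0 < s := ha.trans_le hax
  have hx : x = s ^ 2 := (sq_sqrt (sqrt_pos.1 hs).le).symm
  have hlog := one_div_log_one_add_le (div_pos hb hs)
  calc 1 / (x * log (1 + b / s)) = 1 / s ^ 2 * (1 / log (1 + b / s)) := by
        rw [hx, one_div_mul_one_div]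
    _ ≤ 1 / s ^ 2 * (1 / (b / s) + 1 / 2) := by gcongr
    _ = (1 / b + 1 / (2 * s)) / s := by field_simp
    _ ≤ (1 / b + 1 / (2 * a)) / s := by gcongr

/-- the second-phase sum is `O(√n / R)`. -/
theorem phase2_sum (alpha beta : ℝ) (ha : 0 < alpha) (hb : 0 < beta) :
    ∃ C : ℝ, 0 < C ∧ ∀ (n : ℕ) (R : ℝ), 0 < R →
      1 ≤ alpha * R ^ 2 → alpha * R ^ 2 ≤ (n : ℝ) / 2 →
      ∑ h ∈ Finset.Icc ⌈alpha * R ^ 2⌉₊ (n / 2),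
          1 / ((h : ℝ) * Real.log (1 + beta * R / Real.sqrt h)) ≤
        C * Real.sqrt n / R := by
  set K := 1 / beta + 1 / (2 * √alpha)
  refine ⟨2 * K, by positivity, fun n R hR hone _ => ?_⟩
  have hceil : 1 ≤ ⌈alpha * R ^ 2⌉₊ := Nat.one_le_ceil_iff.2 (by linarith)
  have hterm (h : ℕ) (hh : h ∈ Icc ⌈alpha * R ^ 2⌉₊ (n / 2)) :
      1 / ((h : ℝ) * log (1 + beta * R / √h)) ≤ K / R * (1 / √h) := by
    have hαR : √alpha * R ≤ √h := by
      rw [← sqrt_sq hR.le, ← sqrt_mul ha.le]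
      exact sqrt_le_sqrt (Nat.ceil_le.1 (mem_Icc.1 hh).1)
    calc _ ≤ (1 / (beta * R) + 1 / (2 * (√alpha * R))) / √h :=
          one_div_mul_log_one_add_div_sqrt_le (by positivity) (by positivity) hαR
      _ = K / R * (1 / √h) := by simp only [K]; field_simp
  calc _ ≤ ∑ h ∈ Icc ⌈alpha * R ^ 2⌉₊ (n / 2), K / R * (1 / √(h : ℝ)) := sum_le_sum hterm
    _ ≤ K / R * ∑ h ∈ Icc 1 (n / 2), 1 / √(h : ℝ) := by
        rw [← mul_sum]
        exact mul_le_mul_of_nonneg_left (sum_le_sum_of_subset_of_nonneg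
          (Icc_subset_Icc_left hceil) fun _ _ _ => by positivity) (by positivity)
    _ ≤ K / R * (2 * √(n : ℝ)) := by
        gcongr
        refine (sum_Icc_one_div_sqrt_le _).trans ?_
        gcongr
        exact_mod_cast Nat.div_le_self n 2
    _ = 2 * K * √n / R := by ring

end
end

section
/- For every constant c ≥ 1 there is a constant C > 0 such that the following holds for every n ≥ 3 and every p̂ with e²·c/n ≤ p̂ ≤ 1: Σ_{i=⌊1/p̂⌋+1}^{⌈n/c⌉−1} 1/( i · log(1 + n/(c·i)) ) ≤ C · (1 + log log(n·p̂)), where log denotes the natural logarithm. -/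
open Finset MeasureTheory

noncomputable section

/-!
With `N = n / c` and `F x = log (1 + log (N / x))`, the bound `log (1 + y) ≥ (1 + log y) / 2`
together with `log x - log (x - 1) ∈ [1 / x, 1]` shows that the `i`-th summand is at most
`4 (F (i - 1) - F i)`. The sum therefore telescopes to at most `4 F ⌊1 / p̂⌋`, and since
`N / ⌊1 / p̂⌋ ≤ 2 n p̂` with `log (n p̂) ≥ 2`, this is at most `8 log log (n p̂)`.
-/

open Real

lemma sum_Ioc_pred_sub {M : Type*} [AddCommGroup M] (f : ℕ → M) {a b : ℕ} (hab : a ≤ b) :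
    ∑ i ∈ Ioc a b, (f (i - 1) - f i) = f a - f b := by
  induction b, hab using Nat.le_induction with
  | base => simp
  | succ b hab ih =>
    rw [Finset.sum_Ioc_succ_top hab, ih, Nat.add_sub_cancel]
    abel

lemma sub_div_le_log_sub_log_s19 {u v : ℝ} (hu : 0 < u) (hv : 0 < v) :
    (v - u) / v ≤ log v - log u := by
  have h := one_sub_inv_le_log_of_pos (div_pos hv hu)
  rwa [sub_div, div_self hv.ne', ← inv_div, ← log_div hv.ne' hu.ne']

lemma log_sub_log_le_sub_div {u v : ℝ} (hu : 0 < u) (hv : 0 < v) :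
    log v - log u ≤ (v - u) / u := by
  have h := log_le_sub_one_of_pos (div_pos hv hu)
  rwa [sub_div, div_self hu.ne', ← log_div hv.ne' hu.ne']

lemma one_add_log_le_two_mul_log_one_add {y : ℝ} (hy : 0 < y) :
    1 + log y ≤ 2 * log (1 + y) := by
  have h : exp 1 * y ≤ (1 + y) ^ 2 := by nlinarith [exp_one_lt_d9, sq_nonneg (y - 1)]
  calc 1 + log y = log (exp 1 * y) := by rw [log_mul (exp_pos 1).ne' hy.ne', log_exp]
    _ ≤ log ((1 + y) ^ 2) := log_le_log (by positivity) h
    _ = 2 * log (1 + y) := by rw [log_pow]; push_cast; ring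

lemma inv_mul_log_one_add_div_le {N x : ℝ} (hx : 2 ≤ x) (hxN : x ≤ N) :
    1 / (x * log (1 + N / x)) ≤
      4 * (log (1 + log (N / (x - 1))) - log (1 + log (N / x))) := by
  have hx0 : 0 < x := by linarith
  have hx1 : 0 < x - 1 := by linarith
  have hN : 0 < N := by linarith
  have hLL' : log (N / (x - 1)) - log (N / x) = log x - log (x - 1) := by
    rw [log_div hN.ne' hx1.ne', log_div hN.ne' hx0.ne']; ring
  set L := log (N / x)
  set L' := log (N / (x - 1))
  have hL : 0 ≤ L := log_nonneg ((one_le_div hx0).mpr hxN)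
  have hgap_lower : 1 / x ≤ L' - L := by
    have := sub_div_le_log_sub_log_s19 hx1 hx0
    rw [hLL']; rwa [sub_sub_cancel] at this
  have hgap_upper : L' - L ≤ 1 := by
    have := log_sub_log_le_sub_div hx1 hx0
    rw [sub_sub_cancel] at this
    rw [hLL']; exact this.trans ((div_le_one hx1).mpr (by linarith))
  have hgap_pos : 0 < L' - L := (one_div_pos.mpr hx0).trans_le hgap_lower
  have hlog_lower : (1 + L) / 2 ≤ log (1 + N / x) := by
    linarith [one_add_log_le_two_mul_log_one_add (div_pos hN hx0)]
  have hloglog_lower : (L' - L) / (1 + L') ≤ log (1 + L') - log (1 + L) := by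
    have := sub_div_le_log_sub_log_s19 (u := 1 + L) (v := 1 + L') (by positivity) (by linarith)
    rwa [add_sub_add_left_eq_sub] at this
  calc 1 / (x * log (1 + N / x)) ≤ 1 / (x * ((1 + L) / 2)) := by gcongr
    _ = 4 * ((1 / x) / (2 * (1 + L))) := by field_simp; ring
    _ ≤ 4 * ((L' - L) / (2 * (1 + L))) := by gcongr
    _ ≤ 4 * ((L' - L) / (1 + L')) := by gcongr <;> linarith
    _ ≤ 4 * (log (1 + L') - log (1 + L)) := by gcongr

lemma sum_Ioc_inv_mul_log_one_add_div_le {N : ℝ} {a b : ℕ} (ha : 1 ≤ a) (haN : a ≤ N)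
    (hbN : b ≤ N) :
    ∑ i ∈ Ioc a b, 1 / ((i : ℝ) * log (1 + N / i)) ≤ 4 * log (1 + log (N / a)) := by
  set F : ℕ → ℝ := fun j => log (1 + log (N / j))
  have hF_nonneg : ∀ j : ℕ, 1 ≤ j → (j : ℝ) ≤ N → 0 ≤ F j := fun j hj hjN =>
    log_nonneg (le_add_of_nonneg_right (log_nonneg ((one_le_div (by positivity)).mpr hjN)))
  rcases lt_or_ge b a with hba | hab
  · rw [Ioc_eq_empty_of_le hba.le, sum_empty]
    linarith [hF_nonneg a ha haN]
  have hterm : ∀ i ∈ Ioc a b, 1 / ((i : ℝ) * log (1 + N / i)) ≤ 4 * (F (i - 1) - F i) := by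
    intro i hi
    rw [mem_Ioc] at hi
    have := inv_mul_log_one_add_div_le (N := N) (x := i) (by exact_mod_cast (by omega : 2 ≤ i))
      ((Nat.cast_le.mpr hi.2).trans hbN)
    rwa [← Nat.cast_pred (by omega)] at this
  calc ∑ i ∈ Ioc a b, 1 / ((i : ℝ) * log (1 + N / i))
      ≤ ∑ i ∈ Ioc a b, 4 * (F (i - 1) - F i) := sum_le_sum hterm
    _ = 4 * (F a - F b) := by rw [← mul_sum, sum_Ioc_pred_sub F hab]
    _ ≤ 4 * F a := by linarith [hF_nonneg b (ha.trans hab) hbN]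

lemma log_one_add_log_two_mul_le {y : ℝ} (hy : exp 2 ≤ y) :
    log (1 + log (2 * y)) ≤ 2 * log (log y) := by
  have hy0 : 0 < y := (exp_pos 2).trans_le hy
  have hlog : 2 ≤ log y := by simpa using log_le_log (exp_pos 2) hy
  rw [log_mul two_ne_zero hy0.ne']
  have hsq : 1 + (log 2 + log y) ≤ log y ^ 2 := by nlinarith [log_two_lt_d9]
  calc log (1 + (log 2 + log y)) ≤ log (log y ^ 2) :=
        log_le_log (by linarith [log_two_gt_d9]) hsq
    _ = 2 * log (log y) := by rw [log_pow]; push_cast; ring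

lemma div_floor_inv_le {N p : ℝ} (hN : 0 ≤ N) (hp : 0 < p) (hp1 : p ≤ 1) :
    N / ⌊1 / p⌋₊ ≤ 2 * (N * p) := by
  have hinv : 1 ≤ 1 / p := by rwa [le_div_iff₀ hp, one_mul]
  calc N / ⌊1 / p⌋₊ ≤ N / (1 / p / 2) := by
        gcongr
        exact (Nat.div_two_lt_floor hinv).le
    _ = 2 * (N * p) := by field_simp

/-- the middle-phase sum for edge-MEG is `O(1 + log log (n p̂))`. -/
theorem edge_middle_sum (c : ℝ) (hc : 1 ≤ c) :
    ∃ C : ℝ, 0 < C ∧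
      ∀ (n : ℕ) (phat : ℝ), 3 ≤ n → Real.exp 2 * c / n ≤ phat → phat ≤ 1 →
        ∑ i ∈ Finset.Icc (⌊1 / phat⌋₊ + 1) (⌈(n : ℝ) / c⌉₊ - 1),
            1 / ((i : ℝ) * Real.log (1 + (n : ℝ) / (c * i))) ≤
          C * (1 + Real.log (Real.log ((n : ℝ) * phat))) := by
  refine ⟨8, by norm_num, fun n phat hn hp_lower hp_upper => ?_⟩
  have hn0 : (0 : ℝ) < n := by positivity
  have hc0 : 0 < c := by linarith
  have hnp_c : exp 2 * c ≤ n * phat := by rwa [div_le_iff₀ hn0, mul_comm phat] at hp_lower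
  have hnp : exp 2 ≤ n * phat := (le_mul_of_one_le_right (exp_pos 2).le hc).trans hnp_c
  have hp0 : 0 < phat := pos_of_mul_pos_right ((exp_pos 2).trans_le hnp) hn0.le
  set N : ℝ := n / c
  set a : ℕ := ⌊1 / phat⌋₊
  have ha : 1 ≤ a := Nat.le_floor (by rw [Nat.cast_one, le_div_iff₀ hp0, one_mul]; exact hp_upper)
  have haN : (a : ℝ) ≤ N := by
    refine (Nat.floor_le (by positivity)).trans ?_
    rw [div_le_div_iff₀ hp0 hc0, one_mul]
    exact (le_mul_of_one_le_left hc0.le (one_le_exp two_pos.le)).trans hnp_c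
  have hNa : N / a ≤ 2 * (n * phat) := (div_floor_inv_le (by positivity) hp0 hp_upper).trans
    (by gcongr; exact div_le_self hn0.le hc)
  have hbN : ((⌈N⌉₊ - 1 : ℕ) : ℝ) ≤ N :=
    (Nat.lt_ceil.mp (Nat.sub_one_lt (Nat.ceil_pos.mpr (by positivity)).ne')).le
  have hsummand : ∀ i : ℕ, (n : ℝ) / (c * i) = N / i := fun i => (div_div _ _ _).symm
  simp only [hsummand, Finset.Icc_add_one_left_eq_Ioc]
  calc _ ≤ 4 * log (1 + log (N / a)) := sum_Ioc_inv_mul_log_one_add_div_le ha haN hbN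
    _ ≤ 4 * log (1 + log (2 * (n * phat))) := by
      gcongr
      exact add_pos_of_pos_of_nonneg one_pos (log_nonneg ((one_le_div (by positivity)).mpr haN))
    _ ≤ 8 * (1 + log (log (n * phat))) := by linarith [log_one_add_log_two_mul_le hnp]

end
end
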